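/- The arrow category Arrow (Type u) has a three-valued subobject classifier. Let Ω₀ be a three-element type with elements denoted 1, ½, 0, let Ω₁ = Bool, and let Ω be the object of Arrow (Type u) given by the map t : Ω₀ → Ω₁ with t 1 = true, t ½ = true, t 0 = false. Let truth : (id : PUnit → PUnit) ⟶ Ω be the morphism whose left component picks out 1 and whose right component picks out true. Then truth is a monomorphism, and for every monomorphism φ : a ⟶ b in Arrow (Type u) there exists a unique morphism χ : b ⟶ Ω such that the square with top edge the unique map a ⟶ (id : PUnit → PUnit), left edge φ, right edge truth, and bottom edge χ is a pullback square; moreover this χ is given explicitly by: χ.left x = 1 if x is in the range of φ.left, χ.left x = ½ if x is not in the range of φ.left but b.hom x is in the range of φ.right, χ.left x = 0 otherwise, and χ.right y = true if and only if y is in the range of φ.right. -/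

import Mathlib

open CategoryTheory Limits

universe u

/-- The three truth values of the subobject classifier of the category of topos
causal models: `one` (in the submodel), `half` (not in the submodel, but mapped
into it), `zero` (neither). -/
inductive Omega0 : Type u
  | one : Omega0
  | half : Omega0
  | zero : Omega0

/-- The map `t : Ω₀ → Bool` with `t 1 = true`, `t ½ = true`, `t 0 = false`. -/
def tMap : Omega0.{u} → ULift.{u} Bool
  | Omega0.one => ⟨true⟩
  | Omega0.half => ⟨true⟩
  | Omega0.zero => ⟨false⟩

/-- The subobject classifier `Ω` of the arrow category of `Type u`, given by the
map `t`. -/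
def OmegaArrow : Arrow (Type u) := Arrow.mk (TypeCat.ofHom tMap.{u})

/-- The terminal causal model: the identity on a one-element set. -/
def terminalArrow : Arrow (Type u) := Arrow.mk (𝟙 (PUnit.{u + 1} : Type u))

/-- The truth arrow `true : 1 ⟶ Ω`, picking out `1` on the left and `true` on the
right. -/
def truthArrow : terminalArrow.{u} ⟶ OmegaArrow.{u} :=
  Arrow.homMk (u := TypeCat.ofHom fun _ => Omega0.one) (v := TypeCat.ofHom fun _ => ⟨true⟩) rfl

/-- The unique morphism from a causal model to the terminal causal model. -/
def toTerminalArrow (a : Arrow (Type u)) : a ⟶ terminalArrow.{u} :=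
  Arrow.homMk (u := TypeCat.ofHom fun _ => PUnit.unit) (v := TypeCat.ofHom fun _ => PUnit.unit) rfl

open Classical in
/-- The left component of the characteristic morphism of a monomorphism
`φ : a ⟶ b`: an exogenous element `x` is sent to `1` if it is in the range of
`φ.left`, to `½` if not but its value `b.hom x` is in the range of `φ.right`,
and to `0` otherwise. -/
noncomputable def chiLeft {a b : Arrow (Type u)} (φ : a ⟶ b) (x : b.left) : Omega0.{u} :=
  if x ∈ Set.range φ.left then Omega0.one
  else if b.hom x ∈ Set.range φ.right then Omega0.half
  else Omega0.zero

open Classical in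
/-- The right component of the characteristic morphism of a monomorphism
`φ : a ⟶ b`: an endogenous element `y` is sent to `true` iff it is in the range
of `φ.right`. -/
noncomputable def chiRight {a b : Arrow (Type u)} (φ : a ⟶ b) (y : b.right) : ULift.{u} Bool :=
  if y ∈ Set.range φ.right then ⟨true⟩ else ⟨false⟩

/-- The characteristic morphism `χ : b ⟶ Ω` of a monomorphism `φ : a ⟶ b` of causal
models. -/
noncomputable def chiArrow {a b : Arrow (Type u)} (φ : a ⟶ b) : b ⟶ OmegaArrow.{u} :=
  Arrow.homMk (u := TypeCat.ofHom (chiLeft φ)) (v := TypeCat.ofHom (chiRight φ)) (by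
    refine ConcreteCategory.hom_ext _ _ fun x => ?_
    change tMap (chiLeft φ x) = chiRight φ (b.hom x)
    by_cases h1 : x ∈ Set.range φ.left
    · obtain ⟨w, rfl⟩ := h1
      have h1' : φ.left w ∈ Set.range φ.left := ⟨w, rfl⟩
      have hb : b.hom (φ.left w) ∈ Set.range φ.right := by
        refine ⟨a.hom w, ?_⟩
        have := ConcreteCategory.congr_hom φ.w w
        exact this.symm
      simp [chiLeft, chiRight, OmegaArrow, tMap, h1', hb]
    · by_cases h2 : b.hom x ∈ Set.range φ.right
      · simp [chiLeft, chiRight, OmegaArrow, tMap, h1, h2]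
      · simp [chiLeft, chiRight, OmegaArrow, tMap, h1, h2])

/-! Pullbacks in `Arrow C` are computed componentwise: the components of a square are probed by
the arrows `𝟙 W` and `⊥ ⟶ W`. So `φ` is the pullback of `truthArrow` along `χ` exactly when both
components of `φ` are injective, with ranges the fibres of `χ.left` over `1` and of `χ.right` over
`true`. The explicit `chiArrow φ` has these fibres, and conversely they determine `χ`: `χ.right`
is Bool-valued, and `χ.left x` is fixed by whether it is `1` together with
`t (χ.left x) = χ.right (b.hom x)`, which separates `½` from `0`. -/

namespace CategoryTheory.Arrow

variable {C : Type*} [Category C]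

@[simps!]
def homFromId {W : C} {f : Arrow C} (x : W ⟶ f.left) : Arrow.mk (𝟙 W) ⟶ f :=
  Arrow.homMk x (x ≫ f.hom)

@[simps!]
noncomputable def homFromInitial [HasInitial C] {W : C} {f : Arrow C} (y : W ⟶ f.right) :
    Arrow.mk (initial.to W) ⟶ f :=
  Arrow.homMk (initial.to f.left) y (initial.hom_ext _ _)

@[simp]
lemma homFromId_comp {W : C} {f g : Arrow C} (x : W ⟶ f.left) (sq : f ⟶ g) :
    homFromId x ≫ sq = homFromId (x ≫ sq.left) := by
  ext <;> simp

@[simp]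
lemma homFromInitial_comp [HasInitial C] {W : C} {f g : Arrow C} (y : W ⟶ f.right) (sq : f ⟶ g) :
    homFromInitial y ≫ sq = homFromInitial (y ≫ sq.right) := by
  ext
  · exact initial.hom_ext _ _
  · simp

instance mono_right [HasInitial C] {f g : Arrow C} (sq : f ⟶ g) [Mono sq] : Mono sq.right where
  right_cancellation u v h := by
    have : homFromInitial u ≫ sq = homFromInitial v ≫ sq := by simp only [homFromInitial_comp, h]
    exact congrArg Hom.right ((cancel_mono sq).1 this)

variable {P X Y Z : Arrow C} {fst : P ⟶ X} {snd : P ⟶ Y} {f : X ⟶ Z} {g : Y ⟶ Z}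

lemma isPullback_left (h : IsPullback fst snd f g) :
    IsPullback fst.left snd.left f.left g.left := by
  refine IsPullback.of_isLimit' ⟨by rw [← comp_left, h.w, comp_left]⟩ <|
    PullbackCone.IsLimit.mk _ (fun s ↦ (h.lift (homFromId s.fst) (homFromId s.snd)
      (by simp [s.condition])).left) (fun s ↦ ?_) (fun s ↦ ?_) (fun s m hm₁ hm₂ ↦ ?_)
  · exact congrArg Hom.left (h.lift_fst _ _ _)
  · exact congrArg Hom.left (h.lift_snd _ _ _)
  · have : homFromId m = h.lift (homFromId s.fst) (homFromId s.snd) (by simp [s.condition]) :=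
      h.hom_ext (by simp [← hm₁]) (by simp [← hm₂])
    exact congrArg Hom.left this

lemma isPullback_right [HasInitial C] (h : IsPullback fst snd f g) :
    IsPullback fst.right snd.right f.right g.right := by
  refine IsPullback.of_isLimit' ⟨by rw [← comp_right, h.w, comp_right]⟩ <|
    PullbackCone.IsLimit.mk _ (fun s ↦ (h.lift (homFromInitial s.fst) (homFromInitial s.snd)
      (by simp [s.condition])).right) (fun s ↦ ?_) (fun s ↦ ?_) (fun s m hm₁ hm₂ ↦ ?_)
  · exact congrArg Hom.right (h.lift_fst _ _ _)
  · exact congrArg Hom.right (h.lift_snd _ _ _)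
  · have : homFromInitial m =
        h.lift (homFromInitial s.fst) (homFromInitial s.snd) (by simp [s.condition]) :=
      h.hom_ext (by simp [← hm₁]) (by simp [← hm₂])
    exact congrArg Hom.right this

lemma isPullback_of_isPullback_left_right (hl : IsPullback fst.left snd.left f.left g.left)
    (hr : IsPullback fst.right snd.right f.right g.right) : IsPullback fst snd f g := by
  refine IsPullback.of_isLimit' ⟨by ext; exacts [hl.w, hr.w]⟩ <|
    PullbackCone.IsLimit.mk _ (fun s ↦ Arrow.homMk
      (hl.lift s.fst.left s.snd.left (by rw [← comp_left, s.condition, comp_left]))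
      (hr.lift s.fst.right s.snd.right (by rw [← comp_right, s.condition, comp_right]))
      (hr.hom_ext (by simp [← Arrow.w, hl.lift_fst_assoc])
        (by simp [← Arrow.w, hl.lift_snd_assoc])))
      (fun s ↦ ?_) (fun s ↦ ?_) (fun s m hm₁ hm₂ ↦ ?_)
  · ext <;> simp
  · ext <;> simp
  · ext
    · exact hl.hom_ext (by simp [← hm₁]) (by simp [← hm₂])
    · exact hr.hom_ext (by simp [← hm₁]) (by simp [← hm₂])

lemma isPullback_iff [HasInitial C] : IsPullback fst snd f g ↔
    IsPullback fst.left snd.left f.left g.left ∧ IsPullback fst.right snd.right f.right g.right :=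
  ⟨fun h ↦ ⟨isPullback_left h, isPullback_right h⟩,
    fun h ↦ isPullback_of_isPullback_left_right h.1 h.2⟩

end CategoryTheory.Arrow

lemma CategoryTheory.Limits.Types.isPullback_const_iff {A B Ω : Type u} (m : A ⟶ B)
    (χ : B ⟶ Ω) (t : Ω) :
    IsPullback (↾fun _ : A ↦ PUnit.unit) m (↾fun _ : PUnit.{u + 1} ↦ t) χ ↔
      Function.Injective m ∧ Set.range m = χ ⁻¹' {t} := by
  rw [Types.isPullback_iff]
  simp only [ConcreteCategory.hom_ext_iff, comp_apply, TypeCat.hom_ofHom, TypeCat.Fun.coe_mk,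
    eq_comm (a := t), true_and, forall_const, Set.Subset.antisymm_iff, Set.subset_def,
    Set.mem_range, Set.mem_preimage, Set.mem_singleton_iff, forall_exists_index,
    forall_apply_eq_imp_iff]
  tauto

def terminalArrowIsTerminal : IsTerminal terminalArrow.{u} :=
  IsTerminal.ofUniqueHom toTerminalArrow fun _ _ ↦ by ext <;> rfl

lemma tMap_left_apply {b : Arrow (Type u)} (χ : b ⟶ OmegaArrow.{u}) (x : b.left) :
    tMap (χ.left x) = χ.right (b.hom x) :=
  ConcreteCategory.congr_hom χ.w x

lemma Omega0.eq_of_tMap_eq {p q : Omega0.{u}} (hone : p = .one ↔ q = .one)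
    (ht : tMap p = tMap q) : p = q := by
  cases p <;> cases q <;> simp_all [tMap]

lemma ULift.bool_eq_of_eq_true_iff {p q : ULift.{u} Bool} (h : p = ⟨true⟩ ↔ q = ⟨true⟩) :
    p = q := by
  rcases p with ⟨_ | _⟩ <;> rcases q with ⟨_ | _⟩ <;> simp_all

lemma isPullback_truthArrow_iff {a b : Arrow (Type u)} (φ : a ⟶ b) (χ : b ⟶ OmegaArrow.{u}) :
    IsPullback (toTerminalArrow a) φ truthArrow χ ↔
      (Function.Injective φ.left ∧ Set.range φ.left = χ.left ⁻¹' {Omega0.one}) ∧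
        (Function.Injective φ.right ∧ Set.range φ.right = χ.right ⁻¹' {⟨true⟩}) := by
  rw [Arrow.isPullback_iff]
  exact and_congr (Types.isPullback_const_iff _ _ _) (Types.isPullback_const_iff _ _ _)

lemma omegaArrow_hom_ext {b : Arrow (Type u)} {χ χ' : b ⟶ OmegaArrow.{u}}
    (hl : χ.left ⁻¹' {Omega0.one} = χ'.left ⁻¹' {Omega0.one})
    (hr : χ.right ⁻¹' {⟨true⟩} = χ'.right ⁻¹' {⟨true⟩}) : χ = χ' := by
  have hright (y : b.right) : χ.right y = χ'.right y :=
    ULift.bool_eq_of_eq_true_iff (Set.ext_iff.1 hr y)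
  have hleft (x : b.left) : χ.left x = χ'.left x :=
    Omega0.eq_of_tMap_eq (Set.ext_iff.1 hl x) (by rw [tMap_left_apply, tMap_left_apply, hright])
  ext
  exacts [hleft _, hright _]

lemma range_left_eq_chiArrow_preimage {a b : Arrow (Type u)} (φ : a ⟶ b) :
    Set.range φ.left = (chiArrow φ).left ⁻¹' {Omega0.one} := by
  ext x
  change _ ↔ chiLeft φ x = _
  unfold chiLeft
  split_ifs <;> simp_all

lemma range_right_eq_chiArrow_preimage {a b : Arrow (Type u)} (φ : a ⟶ b) :
    Set.range φ.right = (chiArrow φ).right ⁻¹' {⟨true⟩} := by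
  ext y
  change _ ↔ chiRight φ y = _
  unfold chiRight
  split_ifs <;> simp_all

lemma isPullback_chiArrow {a b : Arrow (Type u)} (φ : a ⟶ b) [Mono φ] :
    IsPullback (toTerminalArrow a) φ truthArrow (chiArrow φ) :=
  (isPullback_truthArrow_iff φ _).2
    ⟨⟨(mono_iff_injective _).1 inferInstance, range_left_eq_chiArrow_preimage φ⟩,
      ⟨(mono_iff_injective _).1 inferInstance, range_right_eq_chiArrow_preimage φ⟩⟩

lemma eq_of_isPullback_truthArrow {a b : Arrow (Type u)} {φ : a ⟶ b}
    {χ χ' : b ⟶ OmegaArrow.{u}}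
    (h : IsPullback (toTerminalArrow a) φ truthArrow χ)
    (h' : IsPullback (toTerminalArrow a) φ truthArrow χ') : χ = χ' := by
  obtain ⟨⟨-, hl⟩, -, hr⟩ := (isPullback_truthArrow_iff φ χ).1 h
  obtain ⟨⟨-, hl'⟩, -, hr'⟩ := (isPullback_truthArrow_iff φ χ').1 h'
  exact omegaArrow_hom_ext (hl.symm.trans hl') (hr.symm.trans hr')

/-- The arrow category of `Type u` (the category of topos causal models) has a
three-valued subobject classifier: the truth arrow `true : 1 ⟶ Ω` is monic, every
monomorphism `φ : a ⟶ b` admits a unique characteristic morphism `χ : b ⟶ Ω`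
making the evident square a pullback, and this `χ` is exactly the explicitly
described `chiArrow φ`. -/
theorem arrow_type_subobject_classifier :
    Mono truthArrow.{u} ∧
      ∀ {a b : Arrow (Type u)} (φ : a ⟶ b) [Mono φ],
        (∃! χ : b ⟶ OmegaArrow.{u}, IsPullback (toTerminalArrow a) φ truthArrow χ) ∧
          IsPullback (toTerminalArrow a) φ truthArrow (chiArrow φ) := by
  refine ⟨terminalArrowIsTerminal.mono_from _, fun φ _ ↦ ?_⟩
  have h := isPullback_chiArrow φ
  exact ⟨⟨chiArrow φ, h, fun χ hχ ↦ eq_of_isPullback_truthArrow hχ h⟩, h⟩
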